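/- There is a constant c such that, in any CL5⁻ proof of a formula F of length k that contains no application of the empty cirquent axiom, the number of applications of ogroup weakening is at most c·k³. -/

import Mathlib

namespace CirquentCalc

/-- Formulas: literals (negation applied only to atoms), ∧, ∨. -/
inductive Fml where
  | pos : ℕ → Fml
  | neg : ℕ → Fml
  | and : Fml → Fml → Fml
  | or : Fml → Fml → Fml
deriving DecidableEq

namespace Fml

/-- Negation (pushed to atoms, as ¬ applies only to atoms). -/
def negate : Fml → Fml
  | pos n => neg n
  | neg n => pos n
  | and a b => or a.negate b.negate
  | or a b => and a.negate b.negate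

/-- Substitution extended homomorphically. -/
def subst (σ : ℕ → Fml) : Fml → Fml
  | pos n => σ n
  | neg n => (σ n).negate
  | and a b => and (a.subst σ) (b.subst σ)
  | or a b => or (a.subst σ) (b.subst σ)

/-- Classical evaluation under a truth assignment. -/
def eval (v : ℕ → Bool) : Fml → Bool
  | pos n => v n
  | neg n => !(v n)
  | and a b => a.eval v && b.eval v
  | or a b => a.eval v || b.eval v

/-- Number of positive occurrences of atom `a`. -/
def cPos (a : ℕ) : Fml → ℕ
  | pos n => if n = a then 1 else 0
  | neg _ => 0
  | and f g => f.cPos a + g.cPos a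
  | or f g => f.cPos a + g.cPos a

/-- Number of negative occurrences of atom `a`. -/
def cNeg (a : ℕ) : Fml → ℕ
  | pos _ => 0
  | neg n => if n = a then 1 else 0
  | and f g => f.cNeg a + g.cNeg a
  | or f g => f.cNeg a + g.cNeg a

/-- Total number of positive occurrences of atoms. -/
def posOcc : Fml → ℕ
  | pos _ => 1
  | neg _ => 0
  | and f g => f.posOcc + g.posOcc
  | or f g => f.posOcc + g.posOcc

/-- Length: total number of occurrences of literals and connectives. -/
def len : Fml → ℕ
  | pos _ => 1
  | neg _ => 1
  | and f g => f.len + g.len + 1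
  | or f g => f.len + g.len + 1

/-- Number of occurrences of ∧. -/
def nAnd : Fml → ℕ
  | pos _ => 0
  | neg _ => 0
  | and f g => f.nAnd + g.nAnd + 1
  | or f g => f.nAnd + g.nAnd

/-- Number of occurrences of ∨. -/
def nOr : Fml → ℕ
  | pos _ => 0
  | neg _ => 0
  | and f g => f.nOr + g.nOr
  | or f g => f.nOr + g.nOr + 1

end Fml

def Tautology (A : Fml) : Prop := ∀ v, A.eval v = true

/-- No atom has more than two occurrences. -/
def Binary (A : Fml) : Prop := ∀ a, A.cPos a + A.cNeg a ≤ 2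

/-- Whenever an atom occurs twice, one occurrence is positive and one negative. -/
def Normal (A : Fml) : Prop := ∀ a, A.cPos a ≤ 1 ∧ A.cNeg a ≤ 1

def AtomicLevel (σ : ℕ → Fml) : Prop := ∀ n, ∃ m, σ n = Fml.pos m

/-- `F` is an instance of `B`: σ(B) = F for some substitution σ. -/
def InstanceOf (F B : Fml) : Prop := ∃ σ, B.subst σ = F

/-- `F` is an atomic-level instance of `B`. -/
def AtomicInstanceOf (F B : Fml) : Prop := ∃ σ, AtomicLevel σ ∧ B.subst σ = F

/-- A cirquent: a pool of (occurrences of) formulas, and a list of ogroups,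
each an (index-)set of oformulas of the pool. -/
structure Cirquent where
  pool : List Fml
  groups : List (Finset ℕ)

def emptyCirquent : Cirquent := ⟨[], []⟩

def idCirquent (F : Fml) : Cirquent := ⟨[F.negate, F], [{0, 1}]⟩

/-- The cirquent with pool ⟨F⟩ and one ogroup containing F. -/
def fmlCirquent (F : Fml) : Cirquent := ⟨[F], [{0}]⟩

/-- Index renaming swapping `i` and `i+1`. -/
def swapIdx (i : ℕ) : ℕ → ℕ := fun j => if j = i then i + 1 else if j = i + 1 then i else j

/-- Index renaming when a new oformula is inserted at position `i`. -/
def insShift (i : ℕ) : ℕ → ℕ := fun j => if j < i then j else j + 1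

/-- Index renaming when the oformulas at positions `i`, `i+1` are merged into one at `i`. -/
def mergeIdx (i : ℕ) : ℕ → ℕ := fun j => if j ≤ i then j else j - 1

/-- Mix: placing the two premise cirquents side by side. -/
def MixStep (A B C : Cirquent) : Prop :=
  C.pool = A.pool ++ B.pool ∧
  C.groups = A.groups ++ B.groups.map (Finset.image (· + A.pool.length))

/-- Oformula exchange: swap two adjacent oformulas, preserving containment. -/
def OfExchStep (P C : Cirquent) : Prop :=
  ∃ (l₁ l₂ : List Fml) (F G : Fml),
    P.pool = l₁ ++ F :: G :: l₂ ∧ C.pool = l₁ ++ G :: F :: l₂ ∧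
    C.groups = P.groups.map (Finset.image (swapIdx l₁.length))

/-- Ogroup exchange: swap two adjacent ogroups. -/
def OgExchStep (P C : Cirquent) : Prop :=
  C.pool = P.pool ∧
  ∃ (g₁ g₂ : List (Finset ℕ)) (Γ Δ : Finset ℕ),
    P.groups = g₁ ++ Γ :: Δ :: g₂ ∧ C.groups = g₁ ++ Δ :: Γ :: g₂

/-- Pool weakening: insert a new oformula, contained in no ogroup. -/
def PoolWeakStep (P C : Cirquent) : Prop :=
  ∃ (l₁ l₂ : List Fml) (F : Fml),
    P.pool = l₁ ++ l₂ ∧ C.pool = l₁ ++ F :: l₂ ∧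
    C.groups = P.groups.map (Finset.image (insShift l₁.length))

/-- Ogroup weakening: add a new arc between a pre-existing ogroup and oformula. -/
def OgWeakStep (P C : Cirquent) : Prop :=
  C.pool = P.pool ∧
  ∃ (g₁ g₂ : List (Finset ℕ)) (Γ : Finset ℕ) (j : ℕ),
    j < P.pool.length ∧ j ∉ Γ ∧
    P.groups = g₁ ++ Γ :: g₂ ∧ C.groups = g₁ ++ insert j Γ :: g₂

/-- Downward duplication: replace an ogroup by two adjacent copies of it. -/
def DupDownStep (P C : Cirquent) : Prop :=
  C.pool = P.pool ∧
  ∃ (g₁ g₂ : List (Finset ℕ)) (Γ : Finset ℕ),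
    P.groups = g₁ ++ Γ :: g₂ ∧ C.groups = g₁ ++ Γ :: Γ :: g₂

/-- Upward duplication: the converse of downward duplication. -/
def DupUpStep (P C : Cirquent) : Prop :=
  C.pool = P.pool ∧
  ∃ (g₁ g₂ : List (Finset ℕ)) (Γ : Finset ℕ),
    P.groups = g₁ ++ Γ :: Γ :: g₂ ∧ C.groups = g₁ ++ Γ :: g₂

/-- ∨-introduction: merge two adjacent oformulas F, G into F ∨ G. -/
def OrIntroStep (P C : Cirquent) : Prop :=
  ∃ (l₁ l₂ : List Fml) (F G : Fml),
    P.pool = l₁ ++ F :: G :: l₂ ∧ C.pool = l₁ ++ (Fml.or F G) :: l₂ ∧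
    C.groups = P.groups.map (Finset.image (mergeIdx l₁.length))

/-- The merging of the ogroup list in ∧-introduction: no ogroup contains both `i`
and `i+1`; every ogroup containing `i` is immediately followed by one containing
`i+1` and vice versa; such pairs are merged. -/
inductive AndMerge (i : ℕ) : List (Finset ℕ) → List (Finset ℕ) → Prop where
  | nil : AndMerge i [] []
  | skip {Γ : Finset ℕ} {l l' : List (Finset ℕ)} :
      i ∉ Γ → (i + 1) ∉ Γ → AndMerge i l l' → AndMerge i (Γ :: l) (Γ :: l')
  | merge {Γ Δ : Finset ℕ} {l l' : List (Finset ℕ)} :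
      i ∈ Γ → (i + 1) ∉ Γ → (i + 1) ∈ Δ → i ∉ Δ →
      AndMerge i l l' → AndMerge i (Γ :: Δ :: l) ((Γ ∪ Δ) :: l')

/-- ∧-introduction. -/
def AndIntroStep (P C : Cirquent) : Prop :=
  ∃ (l₁ l₂ : List Fml) (F G : Fml) (merged : List (Finset ℕ)),
    P.pool = l₁ ++ F :: G :: l₂ ∧ C.pool = l₁ ++ (Fml.and F G) :: l₂ ∧
    AndMerge l₁.length P.groups merged ∧
    C.groups = merged.map (Finset.image (mergeIdx l₁.length))

inductive RuleName where
  | emptyAx | idAx | mix | ofExch | ogExch | poolWeak | ogWeak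
  | dupDown | dupUp | orIntro | andIntro
deriving DecidableEq

/-- The unary (one-premise) rules, by name. -/
def unRel : RuleName → Cirquent → Cirquent → Prop
  | .ofExch => OfExchStep
  | .ogExch => OgExchStep
  | .poolWeak => PoolWeakStep
  | .ogWeak => OgWeakStep
  | .dupDown => DupDownStep
  | .dupUp => DupUpStep
  | .orIntro => OrIntroStep
  | .andIntro => AndIntroStep
  | _ => fun _ _ => False

/-- Proof trees: each node is labeled by its cirquent and the rule used. -/
inductive PTree where
  | leaf (C : Cirquent) (r : RuleName)
  | un (C : Cirquent) (r : RuleName) (p : PTree)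
  | bin (C : Cirquent) (r : RuleName) (p q : PTree)

namespace PTree

def concl : PTree → Cirquent
  | leaf C _ => C
  | un C _ _ => C
  | bin C _ _ _ => C

/-- Validity: each node follows from its children by the named rule. -/
def Valid : PTree → Prop
  | leaf C r =>
      (r = .emptyAx ∧ C = emptyCirquent) ∨ (r = .idAx ∧ ∃ F, C = idCirquent F)
  | un C r p => p.Valid ∧ unRel r p.concl C
  | bin C r p q => p.Valid ∧ q.Valid ∧ r = .mix ∧ MixStep p.concl q.concl C

/-- Number of applications of rule `r` in the proof. -/
def count (r : RuleName) : PTree → ℕ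
  | leaf _ r' => if r' = r then 1 else 0
  | un _ r' p => (if r' = r then 1 else 0) + p.count r
  | bin _ r' p q => (if r' = r then 1 else 0) + p.count r + q.count r

/-- The cirquents occurring in the proof. -/
def cirquents : PTree → List Cirquent
  | leaf C _ => [C]
  | un C _ p => C :: p.cirquents
  | bin C _ p q => C :: (p.cirquents ++ q.cirquents)

/-- Total number of rule applications (nodes). -/
def nodes : PTree → ℕ
  | leaf _ _ => 1
  | un _ _ p => p.nodes + 1
  | bin _ _ p q => p.nodes + q.nodes + 1

/-- Number of leaves of the proof tree. -/
def leavesCount : PTree → ℕ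
  | leaf _ _ => 1
  | un _ _ p => p.leavesCount
  | bin _ _ p q => p.leavesCount + q.leavesCount

end PTree

/-- A proof uses no duplication. -/
def DupFree (p : PTree) : Prop :=
  p.count RuleName.dupDown = 0 ∧ p.count RuleName.dupUp = 0

/-- Provability of a cirquent in CL5. -/
def ProvesC (C : Cirquent) : Prop := ∃ p : PTree, p.Valid ∧ p.concl = C

/-- Provability of a formula in CL5. -/
def ProvesCL5 (F : Fml) : Prop := ∃ p : PTree, p.Valid ∧ p.concl = fmlCirquent F

/-- Provability of a formula in CL5⁻ (CL5 without duplication). -/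
def ProvesCL5m (F : Fml) : Prop :=
  ∃ p : PTree, p.Valid ∧ DupFree p ∧ p.concl = fmlCirquent F

/-- Number of arcs of a cirquent (sum of the sizes of its ogroups). -/
def Cirquent.arcs (C : Cirquent) : ℕ := (C.groups.map Finset.card).sum

/-- Size of a cirquent: sum of the lengths of the oformulas in its pool plus
the sum of the sizes of its ogroups. -/
def Cirquent.size (C : Cirquent) : ℕ := (C.pool.map Fml.len).sum + C.arcs

/-- Size of a proof: the sum of the sizes of the cirquents it contains. -/
def PTree.size (p : PTree) : ℕ := (p.cirquents.map Cirquent.size).sum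

/-- Total number of positive occurrences of atoms in the pool. -/
def Cirquent.poolPosOcc (C : Cirquent) : ℕ := (C.pool.map Fml.posOcc).sum

end CirquentCalc

/-!
Without duplication, ogroup weakening is the only rule that creates arcs: the other rules
preserve the number of arcs, except ∨- and ∧-introduction, each of which destroys at most all
arcs of its premise. A cirquent derived from `I` axioms has at most `I` ogroups over a pool of
total length at most `k`, so an introduction destroys at most `I·k` arcs. The total length of
the pool never decreases, each identity axiom contributes at least `2` to it and each
introduction adds `1`; hence `2·I` and the number of introductions are both at most `k`, and
there are at most `1 + k·k·k` ogroup weakenings.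
-/

namespace CirquentCalc

theorem Fml.one_le_len (F : Fml) : 1 ≤ F.len := by
  cases F <;> simp [Fml.len]

theorem Fml.len_negate (F : Fml) : F.negate.len = F.len := by
  induction F <;> simp [Fml.negate, Fml.len, *]

def Cirquent.poolSize (C : Cirquent) : ℕ := (C.pool.map Fml.len).sum

/-- `Cirquent` allows ogroups to mention indices outside the pool; derivable cirquents do not. -/
def Cirquent.WellFormed (C : Cirquent) : Prop :=
  ∀ g ∈ C.groups, g ⊆ Finset.range C.pool.length

def PTree.introCount (p : PTree) : ℕ := p.count .andIntro + p.count .orIntro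

theorem Cirquent.length_pool_le_poolSize (C : Cirquent) : C.pool.length ≤ C.poolSize := by
  simpa [Cirquent.poolSize] using
    List.length_le_sum_of_one_le (C.pool.map Fml.len) (by simpa using fun F _ => F.one_le_len)

theorem Cirquent.arcs_le_of_wellFormed {C : Cirquent} (hC : C.WellFormed) :
    C.arcs ≤ C.groups.length * C.pool.length := by
  simpa [Cirquent.arcs] using List.sum_le_card_nsmul (C.groups.map Finset.card) _
    (by simpa using fun g hg => by simpa using Finset.card_le_card (hC g hg))

theorem sum_card_map_image {f : ℕ → ℕ} (hf : Function.Injective f) (gs : List (Finset ℕ)) :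
    ((gs.map (Finset.image f)).map Finset.card).sum = (gs.map Finset.card).sum := by
  simp [Function.comp_def, Finset.card_image_of_injective _ hf]

theorem image_subset_range_of_forall_mem_map {f : ℕ → ℕ} {gs : List (Finset ℕ)} {n m : ℕ}
    (hgs : ∀ g ∈ gs, g ⊆ Finset.range n) (hf : ∀ j < n, f j < m) :
    ∀ g ∈ gs.map (Finset.image f), g ⊆ Finset.range m := by
  simp only [List.mem_map, forall_exists_index, and_imp, forall_apply_eq_imp_iff₂,
    Finset.image_subset_iff, Finset.mem_range]
  exact fun g hg j hj => hf j (by simpa using hgs g hg hj)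

theorem AndMerge.length_le {i : ℕ} {l l' : List (Finset ℕ)} (h : AndMerge i l l') :
    l'.length ≤ l.length := by
  induction h <;> simp <;> omega

theorem AndMerge.forall_subset {i : ℕ} {l l' : List (Finset ℕ)} {s : Finset ℕ}
    (h : AndMerge i l l') (hl : ∀ g ∈ l, g ⊆ s) : ∀ g ∈ l', g ⊆ s := by
  induction h with
  | nil => simp
  | skip _ _ _ ih => simp_all
  | merge _ _ _ _ _ ih =>
    simp only [List.mem_cons, forall_eq_or_imp] at hl ⊢
    exact ⟨Finset.union_subset hl.1 hl.2.1, ih hl.2.2⟩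

theorem swapIdx_involutive (i : ℕ) : Function.Involutive (swapIdx i) := by
  intro j; unfold swapIdx; split_ifs <;> omega

theorem insShift_injective (i : ℕ) : Function.Injective (insShift i) := by
  intro a b h; unfold insShift at h; split_ifs at h <;> omega

section Rules

variable {A B P C : Cirquent}

theorem Cirquent.WellFormed.of_pool_eq_of_subset (hP : P.WellFormed) (hp : C.pool = P.pool)
    (hg : ∀ g ∈ C.groups, g ∈ P.groups) : C.WellFormed := by
  intro g hgC
  rw [hp]
  exact hP g (hg g hgC)

theorem MixStep.poolSize_eq (h : MixStep A B C) : C.poolSize = A.poolSize + B.poolSize := by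
  simp [Cirquent.poolSize, h.1]

theorem MixStep.length_groups (h : MixStep A B C) :
    C.groups.length = A.groups.length + B.groups.length := by
  simp [h.2]

theorem MixStep.arcs_eq (h : MixStep A B C) : C.arcs = A.arcs + B.arcs := by
  simp only [Cirquent.arcs, h.2, List.map_append, List.sum_append,
    sum_card_map_image (add_left_injective A.pool.length)]

theorem MixStep.wellFormed (h : MixStep A B C) (hA : A.WellFormed) (hB : B.WellFormed) :
    C.WellFormed := by
  have hlen : C.pool.length = A.pool.length + B.pool.length := by simp [h.1]
  intro g hg
  rw [h.2, List.mem_append] at hg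
  rw [hlen]
  rcases hg with hg | hg
  · exact (hA g hg).trans (Finset.range_subset_range.2 (Nat.le_add_right _ _))
  · exact image_subset_range_of_forall_mem_map hB (fun j hj => by omega) g hg

theorem unRel_poolSize_le {r : RuleName} (h : unRel r P C) :
    P.poolSize + (if r = .andIntro then 1 else 0) + (if r = .orIntro then 1 else 0)
      ≤ C.poolSize := by
  cases r <;> simp only [unRel] at h
  case ofExch =>
    obtain ⟨l₁, l₂, F, G, hP, hC, -⟩ := h
    simp [Cirquent.poolSize, hP, hC]; omega
  case poolWeak =>
    obtain ⟨l₁, l₂, F, hP, hC, -⟩ := h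
    simp [Cirquent.poolSize, hP, hC]
  case orIntro =>
    obtain ⟨l₁, l₂, F, G, hP, hC, -⟩ := h
    simp [Cirquent.poolSize, hP, hC, Fml.len]; omega
  case andIntro =>
    obtain ⟨l₁, l₂, F, G, -, hP, hC, -⟩ := h
    simp [Cirquent.poolSize, hP, hC, Fml.len]; omega
  all_goals simp [Cirquent.poolSize, h.1]

theorem unRel_length_groups_le {r : RuleName} (h : unRel r P C) (hr : r ≠ .dupDown) :
    C.groups.length ≤ P.groups.length := by
  cases r <;> simp only [unRel] at h
  case ogExch => obtain ⟨-, g₁, g₂, Γ, Δ, hP, hC⟩ := h; simp [hP, hC]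
  case ogWeak => obtain ⟨-, g₁, g₂, Γ, j, -, -, hP, hC⟩ := h; simp [hP, hC]
  case dupDown => exact absurd rfl hr
  case dupUp => obtain ⟨-, g₁, g₂, Γ, hP, hC⟩ := h; simp [hP, hC]
  case andIntro =>
    obtain ⟨l₁, l₂, F, G, merged, -, -, hM, hC⟩ := h
    simpa [hC] using hM.length_le
  case ofExch => obtain ⟨l₁, l₂, F, G, -, -, hC⟩ := h; simp [hC]
  case poolWeak => obtain ⟨l₁, l₂, F, -, -, hC⟩ := h; simp [hC]
  case orIntro => obtain ⟨l₁, l₂, F, G, -, -, hC⟩ := h; simp [hC]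

theorem unRel_arcs_ge {r : RuleName} (h : unRel r P C) (hup : r ≠ .dupUp)
    (hor : r ≠ .orIntro) (hand : r ≠ .andIntro) :
    P.arcs + (if r = .ogWeak then 1 else 0) ≤ C.arcs := by
  cases r <;> simp only [unRel] at h
  case ofExch =>
    obtain ⟨l₁, l₂, F, G, -, -, hC⟩ := h
    simp only [Cirquent.arcs, hC, sum_card_map_image (swapIdx_involutive _).injective]; simp
  case ogExch =>
    obtain ⟨-, g₁, g₂, Γ, Δ, hP, hC⟩ := h
    simp [Cirquent.arcs, hP, hC]; omega
  case poolWeak =>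
    obtain ⟨l₁, l₂, F, -, -, hC⟩ := h
    simp only [Cirquent.arcs, hC, sum_card_map_image (insShift_injective _)]; simp
  case ogWeak =>
    obtain ⟨-, g₁, g₂, Γ, j, -, hj, hP, hC⟩ := h
    simp [Cirquent.arcs, hP, hC, Finset.card_insert_of_notMem hj]
  case dupDown =>
    obtain ⟨-, g₁, g₂, Γ, hP, hC⟩ := h
    simp [Cirquent.arcs, hP, hC]
  all_goals simp_all

theorem unRel_wellFormed {r : RuleName} (h : unRel r P C) (hP : P.WellFormed) :
    C.WellFormed := by
  cases r <;> simp only [unRel] at h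
  case ofExch =>
    obtain ⟨l₁, l₂, F, G, hPp, hCp, hC⟩ := h
    have hlen : C.pool.length = P.pool.length := by simp [hPp, hCp]
    have hi : l₁.length + 1 < P.pool.length := by simp [hPp]
    rw [Cirquent.WellFormed, hC, hlen]
    exact image_subset_range_of_forall_mem_map hP fun j hj => by
      unfold swapIdx; split_ifs <;> omega
  case poolWeak =>
    obtain ⟨l₁, l₂, F, hPp, hCp, hC⟩ := h
    have hlen : C.pool.length = P.pool.length + 1 := by simp [hPp, hCp]; omega
    rw [Cirquent.WellFormed, hC, hlen]
    exact image_subset_range_of_forall_mem_map hP fun j hj => by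
      unfold insShift; split_ifs <;> omega
  case orIntro =>
    obtain ⟨l₁, l₂, F, G, hPp, hCp, hC⟩ := h
    have hlen : C.pool.length = l₁.length + l₂.length + 1 := by simp [hCp]; omega
    have hlenP : P.pool.length = l₁.length + l₂.length + 2 := by simp [hPp]; omega
    rw [Cirquent.WellFormed, hC]
    exact image_subset_range_of_forall_mem_map hP fun j hj => by
      unfold mergeIdx; split_ifs <;> omega
  case andIntro =>
    obtain ⟨l₁, l₂, F, G, merged, hPp, hCp, hM, hC⟩ := h
    have hlen : C.pool.length = l₁.length + l₂.length + 1 := by simp [hCp]; omega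
    have hlenP : P.pool.length = l₁.length + l₂.length + 2 := by simp [hPp]; omega
    rw [Cirquent.WellFormed, hC]
    exact image_subset_range_of_forall_mem_map (fun g hg => hM.forall_subset hP g hg)
      fun j hj => by unfold mergeIdx; split_ifs <;> omega
  case ogWeak =>
    obtain ⟨hp, g₁, g₂, Γ, j, hj, -, hPg, hCg⟩ := h
    rw [Cirquent.WellFormed, hPg] at hP
    simp only [List.mem_append, List.mem_cons] at hP
    rw [Cirquent.WellFormed, hCg, hp]
    simp only [List.mem_append, List.mem_cons]
    rintro g (hg | rfl | hg)
    · exact hP g (.inl hg)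
    · exact Finset.insert_subset (Finset.mem_range.2 hj) (hP Γ (.inr (.inl rfl)))
    · exact hP g (.inr (.inr hg))
  case ogExch =>
    obtain ⟨hp, g₁, g₂, Γ, Δ, hPg, hCg⟩ := h
    refine hP.of_pool_eq_of_subset hp fun g hg => ?_
    simp only [hCg, hPg, List.mem_append, List.mem_cons] at hg ⊢
    tauto
  case dupDown =>
    obtain ⟨hp, g₁, g₂, Γ, hPg, hCg⟩ := h
    refine hP.of_pool_eq_of_subset hp fun g hg => ?_
    simp only [hCg, hPg, List.mem_append, List.mem_cons] at hg ⊢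
    tauto
  case dupUp =>
    obtain ⟨hp, g₁, g₂, Γ, hPg, hCg⟩ := h
    refine hP.of_pool_eq_of_subset hp fun g hg => ?_
    simp only [hCg, hPg, List.mem_append, List.mem_cons] at hg ⊢
    tauto

end Rules

namespace PTree

@[simp] theorem concl_leaf (C : Cirquent) (r : RuleName) : (leaf C r).concl = C := rfl
@[simp] theorem concl_un (C : Cirquent) (r : RuleName) (p : PTree) : (un C r p).concl = C := rfl
@[simp] theorem concl_bin (C : Cirquent) (r : RuleName) (p q : PTree) :
    (bin C r p q).concl = C := rfl

theorem Valid.wellFormed : ∀ {p : PTree}, p.Valid → p.concl.WellFormed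
  | leaf C r, hv => by
    rcases hv with ⟨-, rfl⟩ | ⟨-, F, rfl⟩
    · simp [Cirquent.WellFormed, emptyCirquent]
    · simp [Cirquent.WellFormed, idCirquent, Finset.insert_subset_iff]
  | un C r p, ⟨hp, h⟩ => unRel_wellFormed h hp.wellFormed
  | bin C r p q, ⟨hp, hq, _, h⟩ => h.wellFormed hp.wellFormed hq.wellFormed

theorem Valid.length_groups_le {p : PTree} (hv : p.Valid) (hd : p.count .dupDown = 0) :
    p.concl.groups.length ≤ p.leavesCount := by
  induction p with
  | leaf C r =>
    rcases hv with ⟨-, rfl⟩ | ⟨-, F, rfl⟩ <;> simp [leavesCount, emptyCirquent, idCirquent]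
  | un C r p ih =>
    obtain ⟨hp, h⟩ := hv
    simp only [count] at hd
    have hr : r ≠ .dupDown := by rintro rfl; simp at hd
    exact (unRel_length_groups_le h hr).trans (ih hp (by omega))
  | bin C r p q ihp ihq =>
    obtain ⟨hp, hq, -, h⟩ := hv
    simp only [count] at hd
    have hp' := ihp hp (by omega)
    have hq' := ihq hq (by omega)
    simp only [concl_bin, leavesCount, h.length_groups]
    omega

theorem Valid.two_mul_leavesCount_add_introCount_le {p : PTree} (hv : p.Valid)
    (he : p.count .emptyAx = 0) : 2 * p.leavesCount + p.introCount ≤ p.concl.poolSize := by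
  induction p with
  | leaf C r =>
    rcases hv with ⟨rfl, -⟩ | ⟨rfl, F, rfl⟩
    · simp [count] at he
    · have := F.one_le_len
      simp [leavesCount, introCount, count, Cirquent.poolSize, idCirquent, Fml.len_negate]
      omega
  | un C r p ih =>
    obtain ⟨hp, h⟩ := hv
    simp only [count] at he
    have hp' := ih hp (by omega)
    have hstep := unRel_poolSize_le h
    simp only [introCount, concl_un, leavesCount, count] at hp' hstep ⊢
    omega
  | bin C r p q ihp ihq =>
    obtain ⟨hp, hq, rfl, h⟩ := hv
    simp only [count] at he
    have hp' := ihp hp (by omega)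
    have hq' := ihq hq (by omega)
    simp only [introCount, concl_bin, leavesCount, count, h.poolSize_eq, reduceCtorEq,
      if_false] at hp' hq' ⊢
    omega

theorem Valid.count_ogWeak_le {p : PTree} (hv : p.Valid) (hdf : DupFree p) :
    p.count .ogWeak ≤ p.concl.arcs + p.introCount * (p.leavesCount * p.concl.poolSize) := by
  induction p with
  | leaf C r => rcases hv with ⟨rfl, -⟩ | ⟨rfl, -⟩ <;> simp [count]
  | un C r p ih =>
    obtain ⟨hp, h⟩ := hv
    obtain ⟨hdown, hup⟩ := hdf
    simp only [count] at hdown hup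
    have ih' := ih hp ⟨by omega, by omega⟩
    have hps := unRel_poolSize_le h
    have hmono : p.introCount * (p.leavesCount * p.concl.poolSize) ≤
        p.introCount * (p.leavesCount * C.poolSize) := by
      gcongr; omega
    by_cases hint : r = .orIntro ∨ r = .andIntro
    · have harcs : p.concl.arcs ≤ p.leavesCount * C.poolSize := calc
          p.concl.arcs ≤ p.concl.groups.length * p.concl.pool.length :=
            Cirquent.arcs_le_of_wellFormed hp.wellFormed
          _ ≤ p.leavesCount * p.concl.poolSize :=
            Nat.mul_le_mul (hp.length_groups_le (by omega)) (Cirquent.length_pool_le_poolSize _)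
          _ ≤ p.leavesCount * C.poolSize := by gcongr; omega
      rcases hint with rfl | rfl <;>
        simp only [introCount, count, concl_un, leavesCount, reduceCtorEq, if_true, if_false]
          at ih' hmono harcs ⊢ <;> nlinarith
    · have hr : r ≠ .dupUp := by rintro rfl; simp at hup
      have hor : r ≠ .orIntro := fun h => hint (.inl h)
      have hand : r ≠ .andIntro := fun h => hint (.inr h)
      have harcs := unRel_arcs_ge h hr hor hand
      simp only [introCount, count, concl_un, leavesCount, if_neg hor, if_neg hand, zero_add]
        at ih' hmono harcs ⊢
      omega
  | bin C r p q ihp ihq =>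
    obtain ⟨hp, hq, rfl, h⟩ := hv
    obtain ⟨hdown, hup⟩ := hdf
    simp only [count] at hdown hup
    have hp' := ihp hp ⟨by omega, by omega⟩
    have hq' := ihq hq ⟨by omega, by omega⟩
    have hps := h.poolSize_eq
    have hmonop : p.introCount * (p.leavesCount * p.concl.poolSize) ≤
        p.introCount * ((p.leavesCount + q.leavesCount) * C.poolSize) := by
      gcongr <;> omega
    have hmonoq : q.introCount * (q.leavesCount * q.concl.poolSize) ≤
        q.introCount * ((p.leavesCount + q.leavesCount) * C.poolSize) := by
      gcongr <;> omega
    simp only [introCount, count, concl_bin, leavesCount, h.arcs_eq, reduceCtorEq, if_false]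
      at hp' hq' hmonop hmonoq ⊢
    nlinarith

end PTree

end CirquentCalc

open CirquentCalc

/-- There is a constant c such that any CL5⁻ proof of a formula F
of length k with no empty cirquent axiom uses at most c·k³ applications of
ogroup weakening. -/
theorem cl5m_ogroup_weakening_count :
    ∃ c : ℕ, ∀ (F : Fml) (p : PTree),
      p.Valid → DupFree p → p.concl = fmlCirquent F →
      p.count RuleName.emptyAx = 0 →
      p.count RuleName.ogWeak ≤ c * F.len ^ 3 := by
  refine ⟨2, fun F p hv hdf hc he => ?_⟩
  have hweak := hv.count_ogWeak_le hdf
  have hsize := hv.two_mul_leavesCount_add_introCount_le he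
  have harcs : (fmlCirquent F).arcs = 1 := rfl
  have hpool : (fmlCirquent F).poolSize = F.len := by simp [Cirquent.poolSize, fmlCirquent]
  rw [hc, harcs, hpool] at hweak
  rw [hc, hpool] at hsize
  have hk := F.one_le_len
  calc p.count .ogWeak
      ≤ 1 + F.len * (F.len * F.len) := hweak.trans (by gcongr <;> omega)
    _ ≤ 2 * F.len ^ 3 := by nlinarith
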